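/- arXiv:2604.19174 — 2 statements merged into one kernel-verified Lean document; each statement's English description precedes it below -/
import Mathlib

section
/- Every finite normal subgroup of a minimal non-sofic group is contained in the center of the group. -/
/-- The normalized Hamming distance between two permutations of `Fin n`:
the number of points where they differ, divided by `n`. -/
noncomputable def permHammingDist {n : ℕ} (σ τ : Equiv.Perm (Fin n)) : ℝ :=
  ((Finset.univ.filter fun i => σ i ≠ τ i).card : ℝ) / n

/-- A group `G` is sofic if for every finite subset `F ⊆ G` and every `ε > 0` there exist
`n ≥ 1` and a map `θ` from `F` to `Sym(Fin n)` (extended to all of `G`) such that: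
(i) `θ` is an `ε`-approximate homomorphism on `F`;
(ii) `θ` almost sends the identity to the identity;
(iii) distinct elements of `F` are sent to permutations at Hamming distance at least `1/4`. -/
def IsSofic (G : Type*) [Group G] : Prop :=
  ∀ (F : Finset G) (ε : ℝ), 0 < ε →
    ∃ n : ℕ, 1 ≤ n ∧ ∃ θ : G → Equiv.Perm (Fin n),
      (∀ g h : G, g ∈ F → h ∈ F → g * h ∈ F →
        permHammingDist (θ g * θ h) (θ (g * h)) < ε) ∧
      ((1 : G) ∈ F → permHammingDist (θ 1) 1 < ε) ∧
      (∀ x y : G, x ∈ F → y ∈ F → x ≠ y → 1 / 4 ≤ permHammingDist (θ x) (θ y))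

/-- A group is minimal non-sofic if it is not sofic but every proper subgroup is sofic. -/
def IsMinimalNonSofic (G : Type*) [Group G] : Prop :=
  ¬ IsSofic G ∧ ∀ H : Subgroup G, H ≠ ⊤ → IsSofic H

/-! The centralizer of a finite normal subgroup `N` is the kernel of the conjugation action of `G`
on `N`, hence has finite index, and in a minimal non-sofic group every finite-index subgroup is
all of `G`: soficity passes from a finite-index subgroup `H` up to `G`. For this, coset
representatives give a cocycle `G × G ⧸ H → H`, through which a sofic approximation `θ` of `H`
induces permutations of `(G ⧸ H) × Fin n`. The normalized Hamming distance between two such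
permutations is the average over the cosets `q` of the distances on the blocks `{q} × Fin n`,
and each block sees either `θ` at cocycle values or two different cosets, at distance `1`. -/

open Finset
open scoped BigOperators

noncomputable def normHammingDist {ι γ : Type*} [Fintype ι] [DecidableEq γ] (x y : ι → γ) : ℝ :=
  hammingDist x y / Fintype.card ι

section normHammingDist

variable {ι κ γ δ : Type*} [Fintype ι] [DecidableEq γ]

lemma hammingDist_comp_equiv [Fintype κ] (e : κ ≃ ι) (x y : ι → γ) :
    hammingDist (x ∘ e) (y ∘ e) = hammingDist x y := by
  simp only [hammingDist, ← Fintype.card_subtype]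
  exact Fintype.card_congr (e.subtypeEquiv fun _ => Iff.rfl)

lemma permHammingDist_eq_normHammingDist {n : ℕ} (σ τ : Equiv.Perm (Fin n)) :
    permHammingDist σ τ = normHammingDist ⇑σ ⇑τ := by
  rw [normHammingDist, Fintype.card_fin]
  rfl

lemma permHammingDist_permCongrHom [DecidableEq ι] {n : ℕ} (e : ι ≃ Fin n)
    (σ τ : Equiv.Perm ι) :
    permHammingDist (e.permCongrHom σ) (e.permCongrHom τ) = normHammingDist ⇑σ ⇑τ := by
  have hdist : hammingDist ⇑(e.permCongrHom σ) ⇑(e.permCongrHom τ) = hammingDist ⇑σ ⇑τ := by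
    rw [← hammingDist_comp_equiv e.symm]
    exact hammingDist_comp (fun _ => e) fun _ => e.injective
  rw [permHammingDist_eq_normHammingDist, normHammingDist, normHammingDist, hdist,
    Fintype.card_congr e]

lemma normHammingDist_prod [Fintype κ] (x y : κ × ι → γ) :
    normHammingDist x y = 𝔼 k, normHammingDist (fun i => x (k, i)) (fun i => y (k, i)) := by
  have hsum : hammingDist x y = ∑ k, hammingDist (fun i => x (k, i)) (fun i => y (k, i)) := by
    simp only [hammingDist, card_filter]
    exact Fintype.sum_prod_type _
  rw [Fintype.expect_eq_sum_div_card, normHammingDist, hsum, Fintype.card_prod]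
  simp only [normHammingDist, ← sum_div]
  push_cast
  rw [div_div, mul_comm]

lemma normHammingDist_mk_left [DecidableEq δ] (d : δ) (x y : ι → γ) :
    normHammingDist (fun i => (d, x i)) (fun i => (d, y i)) = normHammingDist x y := by
  rw [normHammingDist, normHammingDist, hammingDist_comp (fun _ => Prod.mk d)
    fun _ => Prod.mk_right_injective d]

lemma normHammingDist_mk_of_ne [Nonempty ι] [DecidableEq δ] {d d' : δ} (h : d ≠ d')
    (x y : ι → γ) : normHammingDist (fun i => (d, x i)) (fun i => (d', y i)) = 1 := by
  have hall : hammingDist (fun i => (d, x i)) (fun i => (d', y i)) = Fintype.card ι := by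
    simp [hammingDist, h]
  rw [normHammingDist, hall, div_self (by positivity)]

end normHammingDist

namespace Subgroup

variable {G : Type*} [Group G] (H : Subgroup G)

lemma out_inv_mul_smul_mul_out_mem (g : G) (q : G ⧸ H) : (g • q).out⁻¹ * g * q.out ∈ H := by
  have hq : (((g • q).out : G) : G ⧸ H) = ((g * q.out : G) : G ⧸ H) := by
    rw [QuotientGroup.out_eq', ← smul_eq_mul, ← MulAction.Quotient.smul_mk, QuotientGroup.out_eq']
  simpa [mul_assoc] using QuotientGroup.eq.mp hq

/-- The cocycle of the choice of coset representatives `Quotient.out`: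
`g * q.out = (g • q).out * H.cosetCocycle g q`. -/
noncomputable def cosetCocycle (g : G) (q : G ⧸ H) : H :=
  ⟨(g • q).out⁻¹ * g * q.out, H.out_inv_mul_smul_mul_out_mem g q⟩

lemma cosetCocycle_mul (g h : G) (q : G ⧸ H) :
    H.cosetCocycle (g * h) q = H.cosetCocycle g (h • q) * H.cosetCocycle h q := by
  ext
  simp only [cosetCocycle, coe_mul, mul_smul]
  group

lemma cosetCocycle_one (q : G ⧸ H) : H.cosetCocycle 1 q = 1 := by
  ext
  simp [cosetCocycle]

lemma eq_of_smul_eq_of_cosetCocycle_eq {g g' : G} {q : G ⧸ H} (hq : g • q = g' • q)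
    (hc : H.cosetCocycle g q = H.cosetCocycle g' q) : g = g' := by
  have := congrArg Subtype.val hc
  simp only [cosetCocycle, hq] at this
  exact mul_left_cancel (mul_right_cancel this)

/-- For a homomorphism `θ`, this is the action of `G` induced from `H`. -/
noncomputable def inducedPerm {β : Type*} (θ : H → Equiv.Perm β) (g : G) :
    Equiv.Perm ((G ⧸ H) × β) :=
  Equiv.prodShear (MulAction.toPerm g) fun q => θ (H.cosetCocycle g q)

@[simp]
lemma inducedPerm_apply {β : Type*} (θ : H → Equiv.Perm β) (g : G) (q : G ⧸ H) (b : β) :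
    H.inducedPerm θ g (q, b) = (g • q, θ (H.cosetCocycle g q) b) :=
  rfl

variable [DecidableEq (G ⧸ H)] {n : ℕ} (θ : H → Equiv.Perm (Fin n)) (q : G ⧸ H)

lemma normHammingDist_inducedPerm_mul (g h : G) :
    normHammingDist (fun i => (H.inducedPerm θ g * H.inducedPerm θ h) (q, i))
        (fun i => H.inducedPerm θ (g * h) (q, i)) =
      permHammingDist (θ (H.cosetCocycle g (h • q)) * θ (H.cosetCocycle h q))
        (θ (H.cosetCocycle g (h • q) * H.cosetCocycle h q)) := by
  simp only [Equiv.Perm.mul_apply, inducedPerm_apply, cosetCocycle_mul, mul_smul,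
    normHammingDist_mk_left, permHammingDist_eq_normHammingDist]
  rfl

lemma normHammingDist_inducedPerm_one :
    normHammingDist (fun i => H.inducedPerm θ 1 (q, i))
        (fun i => (1 : Equiv.Perm ((G ⧸ H) × Fin n)) (q, i)) =
      permHammingDist (θ 1) 1 := by
  rw [permHammingDist_eq_normHammingDist,
    ← normHammingDist_mk_left q (θ 1) ⇑(1 : Equiv.Perm (Fin n))]
  simp [cosetCocycle_one]

lemma normHammingDist_inducedPerm_of_smul_eq {g g' : G} (hq : g • q = g' • q) :
    normHammingDist (fun i => H.inducedPerm θ g (q, i)) (fun i => H.inducedPerm θ g' (q, i)) =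
      permHammingDist (θ (H.cosetCocycle g q)) (θ (H.cosetCocycle g' q)) := by
  simp only [inducedPerm_apply, hq, normHammingDist_mk_left, permHammingDist_eq_normHammingDist]

lemma normHammingDist_inducedPerm_of_smul_ne [NeZero n] {g g' : G} (hq : g • q ≠ g' • q) :
    normHammingDist (fun i => H.inducedPerm θ g (q, i)) (fun i => H.inducedPerm θ g' (q, i)) =
      1 :=
  normHammingDist_mk_of_ne hq _ _

end Subgroup

theorem IsSofic.of_finiteIndex {G : Type*} [Group G] {H : Subgroup G} [H.FiniteIndex]
    (hH : IsSofic H) : IsSofic G := by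
  classical
  intro F ε hε
  have : Fintype (G ⧸ H) := H.fintypeQuotientOfFiniteIndex
  let F' : Finset H := (F ×ˢ univ).image fun p : G × (G ⧸ H) => H.cosetCocycle p.1 p.2
  have hF' : ∀ g ∈ F, ∀ q, H.cosetCocycle g q ∈ F' := fun g hg q =>
    mem_image.2 ⟨(g, q), mem_product.2 ⟨hg, mem_univ q⟩, rfl⟩
  obtain ⟨n, hn, θ, hmul, hone, hsep⟩ := hH F' ε hε
  have : NeZero n := ⟨by omega⟩
  let e := (Fintype.equivFin ((G ⧸ H) × Fin n)).permCongrHom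
  refine ⟨_, Fintype.card_pos, fun g => e (H.inducedPerm θ g), ?_, ?_, ?_⟩
  · intro g h hg hh hgh
    have hblock : ∀ q, normHammingDist (fun i => (H.inducedPerm θ g * H.inducedPerm θ h) (q, i))
        (fun i => H.inducedPerm θ (g * h) (q, i)) < ε := fun q => by
      rw [H.normHammingDist_inducedPerm_mul]
      refine hmul _ _ (hF' g hg _) (hF' h hh q) ?_
      rw [← Subgroup.cosetCocycle_mul]
      exact hF' _ hgh q
    rw [← map_mul, permHammingDist_permCongrHom, normHammingDist_prod]
    exact expect_lt (fun q _ => (hblock q).le) ⟨default, mem_univ _, hblock default⟩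
  · intro h1
    have hblock : ∀ q, normHammingDist (fun i => H.inducedPerm θ 1 (q, i))
        (fun i => (1 : Equiv.Perm ((G ⧸ H) × Fin n)) (q, i)) < ε := fun q => by
      rw [H.normHammingDist_inducedPerm_one]
      exact hone (by simpa [Subgroup.cosetCocycle_one] using hF' 1 h1 q)
    rw [← map_one e, permHammingDist_permCongrHom, normHammingDist_prod]
    exact expect_lt (fun q _ => (hblock q).le) ⟨default, mem_univ _, hblock default⟩
  · intro x y hx hy hxy
    have hblock : ∀ q, 1 / 4 ≤ normHammingDist (fun i => H.inducedPerm θ x (q, i))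
        (fun i => H.inducedPerm θ y (q, i)) := fun q => by
      by_cases hq : x • q = y • q
      · rw [H.normHammingDist_inducedPerm_of_smul_eq θ q hq]
        exact hsep _ _ (hF' x hx q) (hF' y hy q)
          fun hc => hxy (H.eq_of_smul_eq_of_cosetCocycle_eq hq hc)
      · rw [H.normHammingDist_inducedPerm_of_smul_ne θ q hq]
        norm_num
    rw [permHammingDist_permCongrHom, normHammingDist_prod]
    exact le_expect univ_nonempty fun q _ => hblock q

namespace Subgroup

lemma ker_conjNormal {G : Type*} [Group G] (N : Subgroup G) [N.Normal] :
    (MulAut.conjNormal : G →* MulAut N).ker = centralizer (N : Set G) := by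
  ext g
  simp only [MonoidHom.mem_ker, MulEquiv.ext_iff, Subtype.ext_iff, MulAut.conjNormal_apply,
    MulAut.one_apply, mem_centralizer_iff, SetLike.mem_coe, Subtype.forall,
    mul_inv_eq_iff_eq_mul]
  exact forall₂_congr fun _ _ => eq_comm

instance finiteIndex_centralizer {G : Type*} [Group G] (N : Subgroup G) [N.Normal]
    [Finite N] : (centralizer (N : Set G)).FiniteIndex := by
  rw [← N.ker_conjNormal]
  infer_instance

end Subgroup

lemma IsMinimalNonSofic.eq_top_of_finiteIndex {G : Type*} [Group G] (hG : IsMinimalNonSofic G)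
    (H : Subgroup G) [H.FiniteIndex] : H = ⊤ := by
  by_contra hH
  exact hG.1 (hG.2 H hH).of_finiteIndex

/-- Every finite normal subgroup of a minimal non-sofic group is central. -/
theorem minimalNonSofic_finite_normal_central (G : Type*) [Group G]
    (hG : IsMinimalNonSofic G) (N : Subgroup G) (hN : N.Normal) (hfin : Finite N) :
    N ≤ Subgroup.center G :=
  Subgroup.centralizer_eq_top_iff_subset.mp (hG.eq_top_of_finiteIndex _)
end

section
/- If there exists a non-sofic group, then there exists a countable non-sofic group G together with a strictly monotone (order-embedding) map q ↦ C_q from the rationals ℚ (with its usual order) to the subgroups of G ordered by inclusion, such that each subgroup C_q is non-sofic and is isomorphic to G as a group. -/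
/-! Soficity only involves finitely many elements at a time, so a non-sofic group has a finitely
generated, hence countable, non-sofic subgroup `H`, which may be taken nontrivial. Let `G` be the
restricted direct power `H^(ℚ)` of finitely supported functions `ℚ → H`, and let `C q` consist
of the elements supported in `(-∞, q)`. Since `(-∞, q)` is in bijection with `ℚ`, each `C q` is
isomorphic to `G`, and `G` is non-sofic because it contains a copy of `H`. -/

open Set

section Sofic

variable {G H : Type*} [Group G] [Group H]

/-- The conditions (i)–(iii) in the definition of soficity, for one finite set `F`. -/
def IsSoficApprox (F : Finset G) (ε : ℝ) {n : ℕ} (θ : G → Equiv.Perm (Fin n)) : Prop :=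
  (∀ g h : G, g ∈ F → h ∈ F → g * h ∈ F → permHammingDist (θ g * θ h) (θ (g * h)) < ε) ∧
    ((1 : G) ∈ F → permHammingDist (θ 1) 1 < ε) ∧
    (∀ x y : G, x ∈ F → y ∈ F → x ≠ y → 1 / 4 ≤ permHammingDist (θ x) (θ y))

theorem isSofic_iff_isSoficApprox : IsSofic G ↔ ∀ (F : Finset G) (ε : ℝ), 0 < ε →
    ∃ n : ℕ, 1 ≤ n ∧ ∃ θ : G → Equiv.Perm (Fin n), IsSoficApprox F ε θ :=
  Iff.rfl

theorem IsSoficApprox.comp [DecidableEq G] {F : Finset H} {f : H → G} {ε : ℝ} {n : ℕ}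
    {θ : G → Equiv.Perm (Fin n)} (hθ : IsSoficApprox (F.image f) ε θ)
    (hmul : ∀ g h : H, g ∈ F → h ∈ F → g * h ∈ F → f g * f h = f (g * h))
    (hone : (1 : H) ∈ F → f 1 = 1) (hinj : InjOn f F) : IsSoficApprox F ε (θ ∘ f) := by
  obtain ⟨happrox, hid, hsep⟩ := hθ
  refine ⟨fun g h hg hh hgh => ?_, fun h1 => ?_, fun x y hx hy hxy => ?_⟩
  · have := happrox (f g) (f h) (F.mem_image_of_mem f hg) (F.mem_image_of_mem f hh)
      (hmul g h hg hh hgh ▸ F.mem_image_of_mem f hgh)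
    rwa [hmul g h hg hh hgh] at this
  · have := hid (hone h1 ▸ F.mem_image_of_mem f h1)
    rwa [← hone h1] at this
  · exact hsep _ _ (F.mem_image_of_mem f hx) (F.mem_image_of_mem f hy) (hinj.ne hx hy hxy)

theorem IsSofic.of_injective {f : H →* G} (hf : Function.Injective f) (hG : IsSofic G) :
    IsSofic H := by
  classical
  intro F ε hε
  obtain ⟨n, hn, θ, hθ⟩ := isSofic_iff_isSoficApprox.mp hG (F.image f) ε hε
  exact ⟨n, hn, θ ∘ f, hθ.comp (fun g h _ _ _ => (map_mul f g h).symm) (fun _ => map_one f)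
    hf.injOn⟩

theorem MulEquiv.isSofic_iff (e : H ≃* G) : IsSofic H ↔ IsSofic G :=
  ⟨IsSofic.of_injective (f := e.symm.toMonoidHom) e.symm.injective,
    IsSofic.of_injective (f := e.toMonoidHom) e.injective⟩

theorem isSofic_of_subsingleton [Subsingleton G] : IsSofic G := by
  intro F ε hε
  refine ⟨1, le_rfl, fun _ => 1, ⟨fun _ _ _ _ _ => ?_, fun _ => ?_, fun x y _ _ hxy => ?_⟩⟩
  · simpa [permHammingDist] using hε
  · simpa [permHammingDist] using hε
  · exact absurd (Subsingleton.elim x y) hxy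

theorem nontrivial_of_not_isSofic (hG : ¬ IsSofic G) : Nontrivial G :=
  not_subsingleton_iff_nontrivial.mp fun _ => hG isSofic_of_subsingleton

theorem isSofic_of_forall_isSofic_closure
    (h : ∀ F : Finset G, IsSofic (Subgroup.closure (F : Set G))) : IsSofic G := by
  classical
  intro F ε hε
  set K := Subgroup.closure (F : Set G)
  -- a retraction onto `K`, multiplicative on `K`
  let r : G → K := fun g => if hg : g ∈ K then ⟨g, hg⟩ else 1
  have hr : ∀ g ∈ F, (r g : G) = g := fun g hg =>
    congrArg Subtype.val (dif_pos (Subgroup.subset_closure hg))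
  obtain ⟨n, hn, θ, hθ⟩ := isSofic_iff_isSoficApprox.mp (h F) (F.image r) ε hε
  refine ⟨n, hn, θ ∘ r, hθ.comp (fun g h hg hh hgh => ?_) (fun h1 => ?_) (fun x hx y hy hxy => ?_)⟩
  · exact Subtype.ext (by simp only [Subgroup.coe_mul, hr g hg, hr h hh, hr _ hgh])
  · exact Subtype.ext (hr 1 h1)
  · rw [← hr x hx, ← hr y hy, hxy]

theorem Subgroup.countable_closure {s : Set G} (hs : s.Countable) : Countable (closure s) := by
  have := hs.to_subtype
  rw [← Subtype.range_coe (s := s), ← FreeGroup.range_lift_eq_closure]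
  exact (MonoidHom.rangeRestrict_surjective _).countable

theorem exists_countable_subgroup_not_isSofic (hG : ¬ IsSofic G) :
    ∃ K : Subgroup G, Countable K ∧ ¬ IsSofic K := by
  by_contra! hK
  exact hG <| isSofic_of_forall_isSofic_closure fun F =>
    hK _ (Subgroup.countable_closure F.countable_toSet)

end Sofic

section RestrictedPower

variable (ι : Type*) (H : Type*) [Group H]

/-- The restricted direct power `H^(ι)`. `Additive` is only there to reuse `Finsupp`, whose
pointwise addition does not need commutativity. -/
abbrev RestrictedPower : Type _ := Multiplicative (ι →₀ Additive H)

variable {ι H}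

namespace RestrictedPower

instance [Countable ι] [Countable H] : Countable (RestrictedPower ι H) :=
  have : Countable (Additive H) := ‹Countable H›
  inferInstanceAs (Countable (ι →₀ Additive H))

noncomputable def single (i : ι) : H →* RestrictedPower ι H :=
  AddMonoidHom.toMultiplicativeRight (Finsupp.singleAddHom i)

theorem single_injective (i : ι) : Function.Injective (single (H := H) i) :=
  fun _ _ h => Finsupp.single_injective (M := Additive H) i (Multiplicative.ofAdd.injective h)

variable (H) in
def supportedIn (s : Set ι) : Subgroup (RestrictedPower ι H) where
  carrier := {x | ∀ i ∉ s, x.toAdd i = (0 : Additive H)}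
  one_mem' _ _ := rfl
  mul_mem' hx hy i hi := by simp [hx i hi, hy i hi]
  inv_mem' hx i hi := by simp [hx i hi]

theorem supportedIn_strictMono [Nontrivial H] : StrictMono (supportedIn (ι := ι) H) := by
  intro s t hst
  obtain ⟨a, ha⟩ := exists_ne (1 : H)
  obtain ⟨i, hit, his⟩ := exists_of_ssubset hst
  refine SetLike.lt_iff_le_and_exists.mpr ⟨fun x hx j hj => hx j (fun hjs => hj (hst.1 hjs)),
    single i a, fun j hj => ?_, fun h => ha ?_⟩
  · simp [single, Finsupp.single_eq_of_ne' (ne_of_mem_of_not_mem hit hj)]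
  · simpa [single] using h i his

noncomputable def embDomain {κ : Type*} (j : ι ↪ κ) : RestrictedPower ι H →* RestrictedPower κ H :=
  AddMonoidHom.toMultiplicative (Finsupp.embDomain.addMonoidHom j)

theorem embDomain_injective {κ : Type*} (j : ι ↪ κ) : Function.Injective (embDomain (H := H) j) :=
  Finsupp.embDomain_injective j

theorem range_embDomain {κ : Type*} (j : ι ↪ κ) :
    (embDomain (H := H) j).range = supportedIn H (range j) := by
  ext x
  constructor
  · rintro ⟨y, rfl⟩ i hi
    exact Finsupp.embDomain_of_notMem_range (M := Additive H) j _ i hi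
  · intro hx
    refine ⟨Multiplicative.ofAdd (x.toAdd.comapDomain j j.injective.injOn), ?_⟩
    ext i
    by_cases hi : i ∈ range j
    · obtain ⟨k, rfl⟩ := hi
      exact Finsupp.embDomain_apply_self (M := Additive H) j _ k
    · exact (Finsupp.embDomain_of_notMem_range (M := Additive H) j _ i hi).trans (hx i hi).symm

noncomputable def supportedInEquiv {κ : Type*} {s : Set κ} (e : ι ≃ s) :
    supportedIn H s ≃* RestrictedPower ι H :=
  let j : ι ↪ κ := e.toEmbedding.trans (Function.Embedding.subtype (· ∈ s))
  have hj : range j = s := by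
    ext x
    simpa [j] using (e.surjective.exists (p := fun y : s => (y : κ) = x)).symm
  (MulEquiv.subgroupCongr (by rw [range_embDomain, hj])).trans
    (MonoidHom.ofInjective (embDomain_injective (H := H) j)).symm

end RestrictedPower

end RestrictedPower

open RestrictedPower in
/-- If a non-sofic group exists, then there is a countable non-sofic group `G`
with a strictly monotone map `q ↦ C q` from `ℚ` to the subgroups of `G` (ordered by
inclusion) such that each `C q` is non-sofic and isomorphic to `G`. -/
theorem exists_countable_nonSofic_with_rational_chain
    (h : ∃ (G : Type) (_ : Group G), ¬ IsSofic G) :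
    ∃ (G : Type) (_ : Group G), Countable G ∧ ¬ IsSofic G ∧
      ∃ C : ℚ → Subgroup G, StrictMono C ∧
        ∀ q : ℚ, ¬ IsSofic (C q) ∧ Nonempty ((C q) ≃* G) := by
  obtain ⟨G₀, _, hG₀⟩ := h
  obtain ⟨H, _, hH⟩ := exists_countable_subgroup_not_isSofic hG₀
  have := nontrivial_of_not_isSofic hH
  have hG : ¬ IsSofic (RestrictedPower ℚ H) := fun hG => hH (hG.of_injective (single_injective 0))
  refine ⟨RestrictedPower ℚ H, inferInstance, inferInstance, hG, fun q => supportedIn H (Iio q),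
    supportedIn_strictMono.comp fun _ _ => Iio_ssubset_Iio, fun q => ?_⟩
  have := (Iio_infinite q).to_subtype
  obtain ⟨e⟩ : Nonempty (ℚ ≃ Iio q) := nonempty_equiv_of_countable
  exact ⟨fun hC => hG ((supportedInEquiv e).isSofic_iff.mp hC), ⟨supportedInEquiv e⟩⟩
end
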